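/- arXiv:2106.11206 — 4 statements merged into one kernel-verified Lean document; each statement's English description precedes it below -/
import Mathlib

section
/- For every η ∈ Ω, the set of vectors {v̄ : v ∈ T_η} ⊆ ℂ^{Λ_{2,n}} is linearly independent over ℂ; since it has cardinality λ_{2,n}, it is a basis of ℂ^{λ_{2,n}}. -/
open Finset

/-- `Λ_{2,n}`: pairs `α ∈ ℕ²` with `1 ≤ α₁ + α₂ ≤ n`. -/
def Lam2 (n : ℕ) : Finset (ℕ × ℕ) :=
  ((range (n+1)) ×ˢ (range (n+1))).filter (fun α => 1 ≤ α.1 + α.2 ∧ α.1 + α.2 ≤ n)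

/-- `v̄ ∈ ℂ^{Λ_{2,n}}`, with `α`-coordinate `C(v₁,α₁)·C(v₂,α₂)`. -/
noncomputable def vbar (n : ℕ) (v : ℕ × ℕ) : (Lam2 n) → ℂ :=
  fun α => ((v.1.choose α.1.1 * v.2.choose α.1.2 : ℕ) : ℂ)

/-- `Λ_{3,n}`: triples `β ∈ ℕ³` with `1 ≤ β₁ + β₂ + β₃ ≤ n`. -/
def Lam3 (n : ℕ) : Finset (ℕ × ℕ × ℕ) :=
  ((range (n+1)) ×ˢ (range (n+1)) ×ˢ (range (n+1))).filter
    (fun β => 1 ≤ β.1 + β.2.1 + β.2.2 ∧ β.1 + β.2.1 + β.2.2 ≤ n)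

/-- The linear map `A_n : ℕ³ → ℕ²` with matrix rows `(1,1,n)` and `(0,1,n+1)`. -/
def Amap (n : ℕ) (β : ℕ × ℕ × ℕ) : ℕ × ℕ :=
  (β.1 + β.2.1 + n * β.2.2, β.2.1 + (n+1) * β.2.2)

/-- `c_β = Σ_{γ ≤ β} (−1)^{|β−γ|} C(β,γ) (A_nγ)‾`. -/
noncomputable def cvec (n : ℕ) (β : ℕ × ℕ × ℕ) : (Lam2 n) → ℂ :=
  ∑ γ ∈ (range (β.1+1)) ×ˢ (range (β.2.1+1)) ×ˢ (range (β.2.2+1)),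
    (((-1 : ℂ) ^ ((β.1 + β.2.1 + β.2.2) - (γ.1 + γ.2.1 + γ.2.2))) *
      ((β.1.choose γ.1 * β.2.1.choose γ.2.1 * β.2.2.choose γ.2.2 : ℕ) : ℂ)) •
      vbar n (Amap n γ)

/-- `J ∈ S_{A_n}`: `J ⊆ Λ_{3,n}`, `|J| = λ_{2,n}`, `det L^c_J ≠ 0`. -/
def memSA (n : ℕ) (J : Finset (ℕ × ℕ × ℕ)) : Prop :=
  J ⊆ Lam3 n ∧ J.card = (Lam2 n).card ∧
    ∀ e : (Lam2 n) ≃ J,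
      (Matrix.of fun i j : (Lam2 n) => cvec n (e i).1 j).det ≠ 0

/-- `m_J = Σ_{β ∈ J} A_nβ`. -/
def mJ (n : ℕ) (J : Finset (ℕ × ℕ × ℕ)) : ℕ × ℕ := ∑ β ∈ J, Amap n β

/-- `f_k(v) = k·v₁ + (1−k)·v₂`. -/
def fk (k : ℕ) (v : ℕ × ℕ) : ℤ := (k : ℤ) * v.1 + (1 - (k : ℤ)) * v.2

/-- Data of a sequence `η = (z, d₀, d₁, …, d_r)`. -/
structure OmegaData where
  r : ℕ
  z : Bool
  d : ℕ → ℕ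

/-- `η ∈ Ω`: `d₀ = 0`, `d_i ≥ 1` for `1 ≤ i ≤ r` (and `d_i = 0` beyond `r`),
and `d₀ + ⋯ + d_r = n`. -/
def OmegaData.IsOmega (n : ℕ) (η : OmegaData) : Prop :=
  η.d 0 = 0 ∧ (∀ i, 1 ≤ i → i ≤ η.r → 1 ≤ η.d i) ∧
  (∀ i, η.r < i → η.d i = 0) ∧
  (∑ i ∈ range (η.r + 1), η.d i) = n

/-- The unique `t` with `Σ_{i=0}^{t−1} d_i < j ≤ Σ_{i=0}^{t} d_i`. -/
noncomputable def tIdx (η : OmegaData) (j : ℕ) : ℕ :=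
  sInf {t | j ≤ ∑ i ∈ range (t+1), η.d i}

/-- The vector `v_{j,η} ∈ ℕ²`. -/
noncomputable def vvec (η : OmegaData) (j : ℕ) : ℕ × ℕ :=
  let t := tIdx η j
  let c := j - ∑ i ∈ range t, η.d i
  let a := (∑ i ∈ range t, if (Odd i ↔ Odd t) then η.d i else 0) + c
  if (η.z = true) ↔ Odd t then (a, 0) else (0, a)

/-- `T_{j,η}` for `1 ≤ j ≤ n`, and `T_{0,η} = {(1,1),…,(n,n)}`. -/
noncomputable def Tj (n : ℕ) (η : OmegaData) (j : ℕ) : Finset (ℕ × ℕ) :=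
  if j = 0 then (range n).image (fun q => (q+1, q+1))
  else (range (n - j + 1)).image (fun p => vvec η j + (p, p))

/-- `T_η = ⋃_{j=0}^{n} T_{j,η}`. -/
noncomputable def Tset (n : ℕ) (η : OmegaData) : Finset (ℕ × ℕ) :=
  (range (n+1)).biUnion (fun j => Tj n η j)

/-- `r_{i,η} = n·π₂(v_{i,η})`. -/
noncomputable def rshift (n : ℕ) (η : OmegaData) (i : ℕ) : ℕ := n * (vvec η i).2

/-- `T'_η = T_{0,η} ∪ ⋃_{i=1}^{n} (T_{i,η} + r_{i,η})`. -/
noncomputable def Tset' (n : ℕ) (η : OmegaData) : Finset (ℕ × ℕ) :=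
  Tj n η 0 ∪ (Finset.Icc 1 n).biUnion
    (fun i => (Tj n η i).image (fun v => v + (rshift n η i, rshift n η i)))

/-- `J_η`: the (unique) subset of `Λ_{3,n}` with `A_n(J_η) = T'_η`. -/
noncomputable def Jset (n : ℕ) (η : OmegaData) : Finset (ℕ × ℕ × ℕ) :=
  (Lam3 n).filter (fun β => Amap n β ∈ Tset' n η)

/-- `z_k = 1` iff `f_k((1,0)) ≤ f_k((n,n+1))`. -/
def zk (n k : ℕ) : Bool := decide (fk k (1, 0) ≤ fk k (n, n+1))

/-- `t_l` in the recursive definition of `η_k`, where `O`, `E` are the odd- and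
even-indexed partial sums `Σ_{j<l, j odd} d_{k,j}` and `Σ_{j<l, j even} d_{k,j}`. -/
noncomputable def tval (n k : ℕ) (l O E : ℕ) : ℕ :=
  let w := (if Odd l then E else O) + 1
  if ((zk n k = true) ↔ Odd l) then
    sSup {m : ℕ | (m : ℤ) * fk k (1, 0) ≤ fk k (w * n, w * (n+1))}
  else
    sSup {m : ℕ | (m : ℤ) * fk k (n, n+1) ≤ fk k (w, 0)}

/-- The pair `(Σ_{j≤l, j odd} d_{k,j}, Σ_{j≤l, j even} d_{k,j})` of the recursion
defining `η_k`. -/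
noncomputable def oeSums (n k : ℕ) : ℕ → ℕ × ℕ
  | 0 => (0, 0)
  | l + 1 =>
    let p := oeSums n k l
    let O := p.1
    let E := p.2
    let S := O + E
    let dnext := if S < n then
        min (n - S) (tval n k (l+1) O E - (if Odd (l+1) then O else E))
      else 0
    if Odd (l+1) then (O + dnext, E) else (O, E + dnext)

/-- `d_{k,l}`. -/
noncomputable def dk (n k : ℕ) : ℕ → ℕ
  | 0 => 0
  | l + 1 =>
    let p := oeSums n k l
    let O := p.1
    let E := p.2
    let S := O + E
    if S < n then
      min (n - S) (tval n k (l+1) O E - (if Odd (l+1) then O else E))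
    else 0

/-- `η_k = (z_k, d_{k,0}, …, d_{k,r})`, where `r` is the first index with
`Σ_{j=0}^{r} d_{k,j} = n`. -/
noncomputable def etak (n k : ℕ) : OmegaData :=
  { r := sInf {r | ∑ j ∈ range (r+1), dk n k j = n},
    z := zk n k,
    d := dk n k }

/-!
The points of `T_η` lie on the `n + 1` distinct lines `x - y = c_j`, where `c_j` is the
`x - y` of `v_{j,η}` (so `c_0 = 0`), and `T_{j,η}` has `n - j + 1` points on the `j`-th line,
the origin being left out when `j = 0`. A polynomial `f` of total degree `≤ n` with
`f (0, 0) = 0` is a combination of the binomials `C(x, α₁) C(y, α₂)`, `α ∈ Λ_{2,n}`, so a linear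
relation `∑ g_v v̄ = 0` gives `∑ g_v f(v) = 0`. For `u ∈ T_{j,η}` take for `f` the product of the
`j` lines `x - y = c_i`, `i < j`, and of the `n - j` vertical lines through the other points of
the `j`-th line (including `x = 0` when `j = 0`): it vanishes on the earlier lines and on the rest
of the `j`-th line but not at `u`, so the relations are triangular and `g = 0`, line by line from
the last one. Finally `|T_η| = λ_{2,n}`.
-/

lemma Nat.mul_choose_eq_add (x a : ℕ) :
    x * x.choose a = (a + 1) * x.choose (a + 1) + a * x.choose a := by
  rcases lt_or_ge x a with hxa | hax
  · simp [Nat.choose_eq_zero_of_lt hxa, Nat.choose_eq_zero_of_lt (hxa.trans (Nat.lt_succ_self a))]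
  · have := Nat.choose_succ_right_eq x a
    calc x * x.choose a = x.choose a * (x - a) + a * x.choose a := by
          rw [mul_comm a (x.choose a), ← Nat.mul_add, Nat.sub_add_cancel hax, mul_comm]
      _ = _ := by rw [← this, mul_comm]

noncomputable def binomFn (α : ℕ × ℕ) : ℕ × ℕ → ℂ :=
  fun v => ((v.1.choose α.1 * v.2.choose α.2 : ℕ) : ℂ)

/-- The polynomial functions of total degree at most `m` on `ℕ²`. -/
noncomputable def binomSpan (m : ℕ) : Submodule ℂ (ℕ × ℕ → ℂ) :=
  Submodule.span ℂ (binomFn '' {α | α.1 + α.2 ≤ m})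

def IsAffine (ℓ : ℕ × ℕ → ℂ) : Prop :=
  ∃ a b c : ℂ, ∀ v, ℓ v = a * v.1 + b * v.2 + c

lemma binomFn_mem_binomSpan {α : ℕ × ℕ} {m : ℕ} (h : α.1 + α.2 ≤ m) :
    binomFn α ∈ binomSpan m :=
  Submodule.subset_span ⟨α, h, rfl⟩

lemma one_mem_binomSpan_zero : (1 : ℕ × ℕ → ℂ) ∈ binomSpan 0 := by
  have h1 : (1 : ℕ × ℕ → ℂ) = binomFn (0, 0) := by
    funext v
    simp [binomFn]
  exact h1 ▸ binomFn_mem_binomSpan le_rfl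

lemma fst_mul_binomFn (a b : ℕ) :
    (fun v : ℕ × ℕ => (v.1 : ℂ)) * binomFn (a, b) =
      ((a + 1 : ℕ) : ℂ) • binomFn (a + 1, b) + (a : ℂ) • binomFn (a, b) := by
  ext v
  have h := congrArg (Nat.cast : ℕ → ℂ) (Nat.mul_choose_eq_add v.1 a)
  push_cast at h
  simp only [binomFn, Pi.mul_apply, Pi.add_apply, Pi.smul_apply, smul_eq_mul]
  push_cast
  linear_combination (v.2.choose b : ℂ) * h

lemma snd_mul_binomFn (a b : ℕ) :
    (fun v : ℕ × ℕ => (v.2 : ℂ)) * binomFn (a, b) =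
      ((b + 1 : ℕ) : ℂ) • binomFn (a, b + 1) + (b : ℂ) • binomFn (a, b) := by
  ext v
  have h := congrArg (Nat.cast : ℕ → ℂ) (Nat.mul_choose_eq_add v.2 b)
  push_cast at h
  simp only [binomFn, Pi.mul_apply, Pi.add_apply, Pi.smul_apply, smul_eq_mul]
  push_cast
  linear_combination (v.1.choose a : ℂ) * h

lemma IsAffine.mul_mem_binomSpan {ℓ f : ℕ × ℕ → ℂ} {m : ℕ} (hℓ : IsAffine ℓ)
    (hf : f ∈ binomSpan m) : ℓ * f ∈ binomSpan (m + 1) := by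
  obtain ⟨a, b, c, hℓ⟩ := hℓ
  have hℓ' : ℓ = a • (fun v : ℕ × ℕ => (v.1 : ℂ)) + b • (fun v : ℕ × ℕ => (v.2 : ℂ)) + c • 1 := by
    ext v
    simp [hℓ]
  suffices binomSpan m ≤ (binomSpan (m + 1)).comap (LinearMap.mulLeft ℂ ℓ) from this hf
  refine Submodule.span_le.2 ?_
  rintro _ ⟨⟨i, k⟩, hik, rfl⟩
  have hik : i + k ≤ m := hik
  have mem (i' k' : ℕ) (h : i' + k' ≤ m + 1) := binomFn_mem_binomSpan (α := (i', k')) h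
  simp only [SetLike.mem_coe, Submodule.mem_comap, LinearMap.mulLeft_apply, hℓ', add_mul,
    smul_mul_assoc, fst_mul_binomFn, snd_mul_binomFn, one_mul]
  refine add_mem (add_mem ?_ ?_) ?_ <;> refine Submodule.smul_mem _ _ ?_
  · exact add_mem (Submodule.smul_mem _ _ (mem _ _ (by omega)))
      (Submodule.smul_mem _ _ (mem _ _ (by omega)))
  · exact add_mem (Submodule.smul_mem _ _ (mem _ _ (by omega)))
      (Submodule.smul_mem _ _ (mem _ _ (by omega)))
  · exact mem _ _ (by omega)

lemma prod_mul_mem_binomSpan {ι : Type*} (s : Finset ι) {ℓ : ι → ℕ × ℕ → ℂ}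
    (hℓ : ∀ i ∈ s, IsAffine (ℓ i)) {f : ℕ × ℕ → ℂ} {m : ℕ} (hf : f ∈ binomSpan m) :
    (∏ i ∈ s, ℓ i) * f ∈ binomSpan (m + #s) := by
  induction s using Finset.cons_induction with
  | empty => simpa using hf
  | cons i s hi ih =>
    rw [prod_cons, card_cons, mul_assoc]
    exact (hℓ i (mem_cons_self i s)).mul_mem_binomSpan
      (ih fun k hk => hℓ k (mem_cons_of_mem hk))

lemma prod_mem_binomSpan {ι : Type*} (s : Finset ι) {ℓ : ι → ℕ × ℕ → ℂ}
    (hℓ : ∀ i ∈ s, IsAffine (ℓ i)) : (∏ i ∈ s, ℓ i) ∈ binomSpan #s := by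
  simpa using prod_mul_mem_binomSpan s hℓ one_mem_binomSpan_zero

/-- The binomials `binomFn α` with `α ∈ Λ_{2,n}` vanish at the origin, and the remaining one,
`binomFn (0, 0)`, is the constant `1`. -/
lemma exists_linearMap_apply_vbar {n : ℕ} {f : ℕ × ℕ → ℂ} (hf : f ∈ binomSpan n)
    (h0 : f (0, 0) = 0) : ∃ φ : (Lam2 n → ℂ) →ₗ[ℂ] ℂ, ∀ v, φ (vbar n v) = f v := by
  have hdeg : {α : ℕ × ℕ | α.1 + α.2 ≤ n} = insert (0, 0) ↑(Lam2 n) := by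
    ext α
    simp only [Set.mem_ofPred_eq, Set.mem_insert_iff, coe_filter, Lam2, mem_product, mem_range,
      Prod.ext_iff]
    omega
  rw [binomSpan, hdeg, Set.image_insert_eq, Submodule.mem_span_insert] at hf
  obtain ⟨t, g, hg, rfl⟩ := hf
  obtain ⟨c, rfl⟩ := (Submodule.mem_span_image_finset_iff_exists_fun ℂ).1 hg
  have hα0 (α : Lam2 n) : binomFn α (0, 0) = 0 := by
    obtain ⟨⟨a, b⟩, hα⟩ := α
    simp only [Lam2, mem_filter] at hα
    rcases Nat.eq_zero_or_pos a with rfl | ha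
    · simp [binomFn, Nat.choose_eq_zero_of_lt (show 0 < b by omega)]
    · simp [binomFn, Nat.choose_eq_zero_of_lt ha]
  have ht : t = 0 := by
    simp only [Pi.add_apply, Pi.smul_apply, Finset.sum_apply, smul_eq_mul, hα0, mul_zero,
      sum_const_zero, add_zero] at h0
    simpa [binomFn] using h0
  refine ⟨∑ α, c α • LinearMap.proj α, fun v => ?_⟩
  simp [ht, Finset.sum_apply, vbar, binomFn]

theorem linearIndependent_of_triangular {ι K M β : Type*} [Ring K] [NoZeroDivisors K]
    [AddCommGroup M] [Module K M] [LinearOrder β] {w : ι → M} (level : ι → β)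
    (φ : ι → M →ₗ[K] K) (hdiag : ∀ i, φ i (w i) ≠ 0)
    (hlower : ∀ i j, j ≠ i → level j ≤ level i → φ i (w j) = 0) :
    LinearIndependent K w := by
  classical
  rw [linearIndependent_iff']
  intro s g hg
  by_contra! h
  obtain ⟨i, hi, hmax⟩ := (s.filter (g · ≠ 0)).exists_max_image level (by
    obtain ⟨i, his, hgi⟩ := h
    exact ⟨i, mem_filter.2 ⟨his, hgi⟩⟩)
  rw [mem_filter] at hi
  have hφ := congrArg (φ i) hg
  rw [map_sum, sum_eq_single i, map_zero, map_smul, smul_eq_mul] at hφ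
  · exact mul_ne_zero hi.2 (hdiag i) hφ
  · intro j hj hji
    by_cases hgj : g j = 0
    · simp [hgj]
    · rw [map_smul, hlower i j hji (hmax j (mem_filter.2 ⟨hj, hgj⟩)), smul_zero]
  · exact fun his => absurd hi.1 his

section Geometry

variable {n : ℕ} {η : OmegaData} {j j' : ℕ}

lemma tIdx_zero (η : OmegaData) : tIdx η 0 = 0 :=
  Nat.sInf_eq_zero.2 (Or.inl (Nat.zero_le _))

lemma le_sum_range_tIdx_succ (hη : η.IsOmega n) (hjn : j ≤ n) :
    j ≤ ∑ i ∈ range (tIdx η j + 1), η.d i :=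
  Nat.sInf_mem (s := {t | j ≤ ∑ i ∈ range (t + 1), η.d i}) ⟨η.r, hjn.trans_eq hη.2.2.2.symm⟩

lemma sum_range_tIdx_lt (hj : 0 < j) : ∑ i ∈ range (tIdx η j), η.d i < j := by
  rcases Nat.eq_zero_or_pos (tIdx η j) with h0 | hpos
  · simpa [h0] using hj
  · obtain ⟨t, ht⟩ := Nat.exists_eq_succ_of_ne_zero hpos.ne'
    have : t ∉ {t | j ≤ ∑ i ∈ range (t + 1), η.d i} := Nat.notMem_of_lt_sInf (by
      rw [← tIdx]
      omega)
    simpa [ht] using this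

lemma tIdx_mono (hη : η.IsOmega n) (hjj' : j ≤ j') (hj'n : j' ≤ n) : tIdx η j ≤ tIdx η j' :=
  Nat.sInf_le (hjj'.trans (le_sum_range_tIdx_succ hη hj'n))

/-- The nonzero coordinate of `v_{j,η}`. -/
noncomputable def vvecEntry (η : OmegaData) (j : ℕ) : ℕ :=
  (∑ i ∈ range (tIdx η j), if (Odd i ↔ Odd (tIdx η j)) then η.d i else 0) +
    (j - ∑ i ∈ range (tIdx η j), η.d i)

lemma vvec_eq (η : OmegaData) (j : ℕ) : vvec η j =
    if (η.z = true ↔ Odd (tIdx η j)) then (vvecEntry η j, 0) else (0, vvecEntry η j) :=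
  rfl

lemma vvecEntry_zero (η : OmegaData) : vvecEntry η 0 = 0 := by
  simp [vvecEntry, tIdx_zero]

lemma one_le_vvecEntry (hj : 0 < j) : 1 ≤ vvecEntry η j := by
  have := sum_range_tIdx_lt (η := η) hj
  unfold vvecEntry
  omega

lemma vvecEntry_lt_of_odd_iff (hη : η.IsOmega n) (hj : 0 < j) (hjj' : j < j') (hj'n : j' ≤ n)
    (hpar : Odd (tIdx η j) ↔ Odd (tIdx η j')) : vvecEntry η j < vvecEntry η j' := by
  have hj_le := le_sum_range_tIdx_succ hη (hjj'.le.trans hj'n)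
  have hj_gt := sum_range_tIdx_lt (η := η) hj
  have hj'_gt := sum_range_tIdx_lt (η := η) (hj.trans hjj')
  rw [sum_range_succ] at hj_le
  unfold vvecEntry
  rcases (tIdx_mono hη hjj'.le hj'n).lt_or_eq with hlt | heq
  · have hsame :
        (∑ i ∈ range (tIdx η j + 1), if (Odd i ↔ Odd (tIdx η j)) then η.d i else 0) ≤
          ∑ i ∈ range (tIdx η j'), if (Odd i ↔ Odd (tIdx η j')) then η.d i else 0 := by
      simp_rw [hpar]
      exact sum_le_sum_of_subset (range_subset_range.2 hlt)
    rw [sum_range_succ, if_pos Iff.rfl] at hsame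
    omega
  · rw [← heq]
    omega

def diagCoord (v : ℕ × ℕ) : ℤ := v.1 - v.2

noncomputable def lineOffset (η : OmegaData) (j : ℕ) : ℤ := diagCoord (vvec η j)

lemma lineOffset_zero (η : OmegaData) : lineOffset η 0 = 0 := by
  rw [lineOffset, vvec_eq, vvecEntry_zero]
  split <;> rfl

lemma lineOffset_eq (η : OmegaData) (j : ℕ) : lineOffset η j =
    if (η.z = true ↔ Odd (tIdx η j)) then (vvecEntry η j : ℤ) else -(vvecEntry η j : ℤ) := by
  rw [lineOffset, vvec_eq]
  split <;> simp [diagCoord]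

lemma lineOffset_ne (hη : η.IsOmega n) (hjj' : j < j') (hj'n : j' ≤ n) :
    lineOffset η j ≠ lineOffset η j' := by
  have h' := one_le_vvecEntry (η := η) (j := j') (by omega)
  rcases Nat.eq_zero_or_pos j with rfl | hj
  · rw [lineOffset_zero, lineOffset_eq]
    split <;> omega
  · have h := one_le_vvecEntry (η := η) hj
    have hlt := vvecEntry_lt_of_odd_iff hη hj hjj' hj'n
    rw [lineOffset_eq, lineOffset_eq]
    -- the sign of `lineOffset η j` is fixed by the parity of `tIdx η j`
    split_ifs with h1 h2 h2 <;> first | omega | (have := hlt (by tauto); omega)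

lemma mem_Tj_zero {v : ℕ × ℕ} : v ∈ Tj n η 0 ↔ ∃ q < n, v = (q + 1, q + 1) := by
  simp [Tj, eq_comm]

lemma mem_Tj (hj : j ≠ 0) {v : ℕ × ℕ} :
    v ∈ Tj n η j ↔ ∃ p < n - j + 1, v = vvec η j + (p, p) := by
  simp [Tj, hj, eq_comm]

lemma diagCoord_of_mem_Tj {v : ℕ × ℕ} (hv : v ∈ Tj n η j) : diagCoord v = lineOffset η j := by
  rcases eq_or_ne j 0 with rfl | hj
  · obtain ⟨q, -, rfl⟩ := mem_Tj_zero.1 hv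
    simp [diagCoord, lineOffset_zero]
  · obtain ⟨p, -, rfl⟩ := (mem_Tj hj).1 hv
    simp only [diagCoord, lineOffset, Prod.fst_add, Prod.snd_add]
    push_cast
    ring

lemma Tj_disjoint (hη : η.IsOmega n) (hjn : j ≤ n) (hj'n : j' ≤ n) (hne : j ≠ j') :
    Disjoint (Tj n η j) (Tj n η j') := by
  refine disjoint_left.2 fun v hv hv' => ?_
  have hoff := (diagCoord_of_mem_Tj hv).symm.trans (diagCoord_of_mem_Tj hv')
  rcases hne.lt_or_gt with h | h
  · exact lineOffset_ne hη h hj'n hoff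
  · exact lineOffset_ne hη h hjn hoff.symm

lemma mem_Tset {v : ℕ × ℕ} : v ∈ Tset n η ↔ ∃ j ≤ n, v ∈ Tj n η j := by
  simp [Tset]

lemma card_Tj (n : ℕ) (η : OmegaData) (j : ℕ) :
    #(Tj n η j) = if j = 0 then n else n - j + 1 := by
  unfold Tj
  split_ifs <;>
    rw [card_image_of_injective _ fun a b h => by simpa using congrArg Prod.fst h, card_range]

lemma card_Lam2_row {n a : ℕ} (ha : a ≤ n) :
    #((range (n + 1)).filter fun b => 1 ≤ a + b ∧ a + b ≤ n) =
      if a = 0 then n else n - a + 1 := by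
  split_ifs with h
  · subst h
    have hrow : ((range (n + 1)).filter fun b => 1 ≤ 0 + b ∧ 0 + b ≤ n) = Icc 1 n := by
      ext b
      simp only [mem_filter, mem_range, mem_Icc]
      omega
    rw [hrow, Nat.card_Icc, Nat.add_sub_cancel]
  · convert card_range (n - a + 1) using 2
    ext b
    simp only [mem_filter, mem_range]
    omega

lemma card_Tset_eq_card_Lam2 (hη : η.IsOmega n) : #(Tset n η) = #(Lam2 n) := by
  rw [Tset, card_biUnion fun j hj j' hj' hne =>
    Tj_disjoint hη (Nat.lt_succ_iff.1 (mem_range.1 hj)) (Nat.lt_succ_iff.1 (mem_range.1 hj')) hne]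
  rw [Lam2, card_filter, sum_product]
  refine sum_congr rfl fun a ha => ?_
  rw [← card_filter, card_Tj, card_Lam2_row (Nat.lt_succ_iff.1 (mem_range.1 ha))]

end Geometry

section Lagrange

variable {n : ℕ} {η : OmegaData} {j : ℕ}

/-- The `x`-coordinates of `T_{j,η}`, together with `0` when `j = 0`. -/
noncomputable def xNodes (n : ℕ) (η : OmegaData) (j : ℕ) : Finset ℕ :=
  if j = 0 then range (n + 1) else (range (n - j + 1)).image fun p => (vvec η j).1 + p

lemma card_xNodes (n : ℕ) (η : OmegaData) (j : ℕ) : #(xNodes n η j) = n - j + 1 := by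
  unfold xNodes
  split_ifs with hj
  · simp [hj]
  · rw [card_image_of_injective _ (add_right_injective _), card_range]

lemma fst_mem_xNodes {v : ℕ × ℕ} (hv : v ∈ Tj n η j) : v.1 ∈ xNodes n η j := by
  rcases eq_or_ne j 0 with rfl | hj
  · obtain ⟨q, hq, rfl⟩ := mem_Tj_zero.1 hv
    simpa [xNodes] using hq
  · obtain ⟨p, hp, rfl⟩ := (mem_Tj hj).1 hv
    simp only [xNodes, hj, if_false, mem_image, mem_range, Prod.fst_add]
    exact ⟨p, hp, rfl⟩

lemma eq_of_mem_Tj_of_fst_eq {v w : ℕ × ℕ} (hv : v ∈ Tj n η j) (hw : w ∈ Tj n η j)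
    (h : v.1 = w.1) : v = w := by
  rcases eq_or_ne j 0 with rfl | hj
  · obtain ⟨q, -, rfl⟩ := mem_Tj_zero.1 hv
    obtain ⟨q', -, rfl⟩ := mem_Tj_zero.1 hw
    simp_all
  · obtain ⟨p, -, rfl⟩ := (mem_Tj hj).1 hv
    obtain ⟨p', -, rfl⟩ := (mem_Tj hj).1 hw
    simp_all

noncomputable def lagrange (n : ℕ) (η : OmegaData) (j : ℕ) (u : ℕ × ℕ) : ℕ × ℕ → ℂ :=
  (∏ i ∈ range j, fun v => (diagCoord v : ℂ) - lineOffset η i) *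
    ∏ x ∈ (xNodes n η j).erase u.1, fun v => (v.1 : ℂ) - x

lemma lagrange_apply (u v : ℕ × ℕ) : lagrange n η j u v =
    (∏ i ∈ range j, ((diagCoord v : ℂ) - lineOffset η i)) *
      ∏ x ∈ (xNodes n η j).erase u.1, ((v.1 : ℂ) - x) := by
  simp [lagrange, prod_apply]

lemma lagrange_mem_binomSpan {u : ℕ × ℕ} (hjn : j ≤ n) (hu : u ∈ Tj n η j) :
    lagrange n η j u ∈ binomSpan n := by
  have hnodes := prod_mem_binomSpan ((xNodes n η j).erase u.1)
    (ℓ := fun x v => (v.1 : ℂ) - x) fun x _ => ⟨1, 0, -x, fun v => by ring⟩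
  have h := prod_mul_mem_binomSpan (range j)
    (ℓ := fun i v => (diagCoord v : ℂ) - lineOffset η i)
    (fun i _ => ⟨1, -1, -lineOffset η i, fun v => by simp [diagCoord]; ring⟩) hnodes
  rwa [card_erase_of_mem (fst_mem_xNodes hu), card_xNodes, card_range,
    show n - j + 1 - 1 + j = n by omega] at h

lemma lagrange_apply_zero {u : ℕ × ℕ} (hu : u ∈ Tj n η j) : lagrange n η j u (0, 0) = 0 := by
  rw [lagrange_apply]
  rcases eq_or_ne j 0 with rfl | hj
  · obtain ⟨q, -, rfl⟩ := mem_Tj_zero.1 hu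
    refine mul_eq_zero_of_right _ (prod_eq_zero (i := 0) ?_ (by simp))
    simp [xNodes]
  · refine mul_eq_zero_of_left (prod_eq_zero (i := 0) (by simpa [Nat.pos_iff_ne_zero]) ?_) _
    simp [diagCoord, lineOffset_zero]

lemma lagrange_eq_zero_of_lt {u v : ℕ × ℕ} {i : ℕ} (hij : i < j) (hv : v ∈ Tj n η i) :
    lagrange n η j u v = 0 := by
  rw [lagrange_apply, diagCoord_of_mem_Tj hv]
  exact mul_eq_zero_of_left (prod_eq_zero (mem_range.2 hij) (sub_self _)) _

lemma lagrange_eq_zero_of_ne {u v : ℕ × ℕ} (hu : u ∈ Tj n η j) (hv : v ∈ Tj n η j)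
    (hvu : v ≠ u) : lagrange n η j u v = 0 := by
  have hx : v.1 ∈ (xNodes n η j).erase u.1 :=
    mem_erase.2 ⟨fun h => hvu (eq_of_mem_Tj_of_fst_eq hv hu h), fst_mem_xNodes hv⟩
  rw [lagrange_apply]
  exact mul_eq_zero_of_right _ (prod_eq_zero hx (sub_self _))

lemma lagrange_self_ne_zero (hη : η.IsOmega n) (hjn : j ≤ n) {u : ℕ × ℕ}
    (hu : u ∈ Tj n η j) : lagrange n η j u u ≠ 0 := by
  rw [lagrange_apply, diagCoord_of_mem_Tj hu]
  refine mul_ne_zero (prod_ne_zero_iff.2 fun i hi => ?_) (prod_ne_zero_iff.2 fun x hx => ?_)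
  · exact sub_ne_zero.2 (by exact_mod_cast (lineOffset_ne hη (mem_range.1 hi) hjn).symm)
  · exact sub_ne_zero.2 (by exact_mod_cast (ne_of_mem_erase hx).symm)

end Lagrange

theorem stmt1_general (n : ℕ) (η : OmegaData) (hη : η.IsOmega n) :
    LinearIndependent ℂ (fun v : (Tset n η) => vbar n v.1) ∧
    Submodule.span ℂ (Set.range (fun v : (Tset n η) => vbar n v.1)) = ⊤ := by
  choose level hlevel_le hlevel using fun u : Tset n η => mem_Tset.1 u.2
  choose φ hφ using fun u : Tset n η =>
    exists_linearMap_apply_vbar (lagrange_mem_binomSpan (hlevel_le u) (hlevel u))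
      (lagrange_apply_zero (hlevel u))
  have hli : LinearIndependent ℂ (fun v : Tset n η => vbar n v.1) := by
    refine linearIndependent_of_triangular level φ
      (fun u => (hφ u u).trans_ne (lagrange_self_ne_zero hη (hlevel_le u) (hlevel u)))
      fun u v hvu hle => (hφ u v).trans ?_
    rcases hle.lt_or_eq with hlt | heq
    · exact lagrange_eq_zero_of_lt hlt (hlevel v)
    · exact lagrange_eq_zero_of_ne (hlevel u) (heq ▸ hlevel v) (Subtype.coe_injective.ne hvu)
  refine ⟨hli, hli.span_eq_top_of_card_eq_finrank' ?_⟩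
  simp [card_Tset_eq_card_Lam2 hη]

theorem stmt1 (n : ℕ) (hn : 1 ≤ n) (η : OmegaData) (hη : η.IsOmega n) :
    LinearIndependent ℂ (fun v : (Tset n η) => vbar n v.1) ∧
    Submodule.span ℂ (Set.range (fun v : (Tset n η) => vbar n v.1)) = ⊤ :=
  stmt1_general n η hη
end

section
/- For every k ∈ {1,…,n} there exists η ∈ Ω with η ≠ η_k such that f_k(m_{J_η}) = f_k(m_{J_{η_k}}). -/
/-!
Splitting the last block `d_r` of `η_k` into `(d_r - 1, 1)` changes none of the `v_{j,η}` with
`j < n` and moves `v_{n,η}` to the other axis: its value `A`, the total of the blocks on the axis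
of block `r`, becomes `B`, the total of the blocks on the other axis plus one. Along each axis the
values of the `v_{j,η}` increase with `j`, so the point of `T'_η` coming from `j = n` is not among
the others, and `A_n` is injective on `Λ_{3,n}`; hence `f_k(m_{J_η})` changes by `w' B - w A`,
where `w, w' ∈ {k, n + 1 - k}` are the `f_k`-weights of the two axes.

With `p ≤ q` the two weights, the odd blocks of `η_k` lie on the axis of weight `p`, the even
ones on that of weight `q`, and the recursion lists the multiples of `p` and of `q` in increasing
order. As `p + q = n + 1`, exactly `n + 1` of them are at most `pq`, two of them equal to `pq`, so
the recursion stops at the first copy of `pq`: either `A = q, w = p, B = p, w' = q` or the other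
way round, and in both cases `w A = w' B = pq`. For `n ≥ 2` the last block has length at least
`2`, so it can be split; for `n = 1` flipping `z` works instead.
-/

open Finset

namespace Greedy

/-- A block of `η_k` advances an axis holding `X` values of weight `a` while the other axis holds
`Y` values of weight `b`: here `t_l = ⌊(Y + 1) b / a⌋` and `s_l = X`, so this is `d_{k,l}`. -/
def advance (a b n X Y : ℕ) : ℕ :=
  if X + Y < n then min (n - (X + Y)) ((Y + 1) * b / a - X) else 0

def Balanced (a b X Y : ℕ) : Prop := X * a ≤ (Y + 1) * b ∧ Y * b ≤ (X + 1) * a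

/-- The second alternative is the initial state, where `z_k` lets the smaller weight go first. -/
def Ready (a b X Y : ℕ) : Prop := (X + 1) * a < (Y + 1) * b ∨ (X = 0 ∧ Y = 0 ∧ a ≤ b)

def Inv (a b n X Y : ℕ) : Prop :=
  X + Y ≤ n ∧ Balanced a b X Y ∧ (X + Y < n → Ready a b X Y)

variable {a b n X Y : ℕ}

lemma add_advance_add_le (h : X + Y ≤ n) : X + advance a b n X Y + Y ≤ n := by
  unfold advance; split_ifs <;> omega

lemma le_add_advance_of_lt (h : X + advance a b n X Y + Y < n) :
    (Y + 1) * b / a ≤ X + advance a b n X Y := by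
  unfold advance at *; split_ifs at * <;> omega

lemma Balanced.symm (h : Balanced a b X Y) : Balanced b a Y X := ⟨h.2, h.1⟩

lemma Balanced.add_advance (ha : 0 < a) (h : Balanced a b X Y) :
    Balanced a b (X + advance a b n X Y) Y := by
  refine ⟨?_, h.2.trans (Nat.mul_le_mul_right _ (by omega))⟩
  rcases Nat.eq_zero_or_pos (advance a b n X Y) with h0 | hpos
  · simpa [h0] using h.1
  · refine (Nat.le_div_iff_mul_le ha).1 ?_
    unfold advance at *; split_ifs at * <;> omega

lemma Ready.mul_le (h : Ready a b X Y) : (X + 1) * a ≤ (Y + 1) * b := by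
  rcases h with h | ⟨rfl, rfl, h⟩ <;> omega

lemma Inv.swap_add_advance (ha : 0 < a) (h : Inv a b n X Y) :
    Inv b a n Y (X + advance a b n X Y) := by
  obtain ⟨hle, hbal, -⟩ := h
  have := add_advance_add_le (a := a) (b := b) hle
  refine ⟨by omega, (hbal.add_advance ha).symm, fun hlt => Or.inl ?_⟩
  exact (Nat.div_lt_iff_lt_mul ha).1 (Nat.lt_succ_of_le (le_add_advance_of_lt (by omega)))

lemma Inv.one_le_advance (ha : 0 < a) (h : Inv a b n X Y) (hlt : X + Y < n) :
    1 ≤ advance a b n X Y := by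
  have : X + 1 ≤ (Y + 1) * b / a := (Nat.le_div_iff_mul_le ha).2 (h.2.2 hlt).mul_le
  simp only [advance, if_pos hlt]
  omega

/-- When `a + b = n + 1`, the advance that exhausts `n` stops exactly at `(X, Y) = (b, a - 1)`:
both axes end at the common value `a * b`. -/
lemma Inv.eq_of_advance_eq (ha : 0 < a) (hab : a + b = n + 1) (h : Inv a b n X Y)
    (hlt : X + Y < n) (hend : X + advance a b n X Y + Y = n) :
    X + advance a b n X Y = b ∧ Y + 1 = a ∧ (2 ≤ n → 2 ≤ advance a b n X Y) := by
  set s := advance a b n X Y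
  have hY : Y + 1 ≤ a := by
    by_contra hY
    have : a * b ≤ a * (X + 1) := by nlinarith [h.2.1.2]
    have := Nat.le_of_mul_le_mul_left this ha
    omega
  have hXs : X + s ≤ b := by
    have : a * (X + s) ≤ a * b := by nlinarith [(h.2.1.add_advance (n := n) ha).1]
    exact Nat.le_of_mul_le_mul_left this ha
  refine ⟨by omega, by omega, fun hn => ?_⟩
  rcases h.2.2 hlt with hready | ⟨rfl, rfl, -⟩
  · have : a * (X + 1) < a * b := by nlinarith
    have := Nat.lt_of_mul_lt_mul_left this
    omega
  · omega

end Greedy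

def sameParitySum (d : ℕ → ℕ) (t m : ℕ) : ℕ :=
  ∑ i ∈ range m, if (Odd i ↔ Odd t) then d i else 0

lemma sameParitySum_congr (d : ℕ → ℕ) (m : ℕ) {t t' : ℕ} (h : Odd t ↔ Odd t') :
    sameParitySum d t m = sameParitySum d t' m := by
  simp only [sameParitySum, h]

lemma sameParitySum_succ (d : ℕ → ℕ) (t m : ℕ) :
    sameParitySum d t (m + 1) = sameParitySum d t m + if (Odd m ↔ Odd t) then d m else 0 :=
  sum_range_succ _ _

lemma sameParitySum_mono (d : ℕ → ℕ) (t : ℕ) {m m' : ℕ} (h : m ≤ m') :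
    sameParitySum d t m ≤ sameParitySum d t m' :=
  sum_le_sum_of_subset (range_subset_range.2 h)

/-- The `f_k`-weight of the axis that carries the odd blocks of `η_k`; `z_k` is chosen so
that this is the smaller of `k` and `n + 1 - k`. -/
def oddWeight (n k : ℕ) : ℕ := if zk n k then k else n + 1 - k

def evenWeight (n k : ℕ) : ℕ := if zk n k then n + 1 - k else k

lemma sSup_setOf_mul_le_eq_div (b c : ℕ) (hc : 0 < c) :
    sSup {m : ℕ | (m : ℤ) * c ≤ b} = b / c := by
  have : {m : ℕ | (m : ℤ) * c ≤ b} = Set.Iic (b / c) := by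
    ext m
    simp only [Set.mem_ofPred_eq, Set.mem_Iic, Nat.le_div_iff_mul_le hc]
    exact_mod_cast Iff.rfl
  rw [this, csSup_Iic]

section Weights

variable {n k : ℕ}

lemma zk_eq_true_iff : zk n k = true ↔ 2 * k ≤ n + 1 := by
  unfold zk fk
  rw [decide_eq_true_iff]
  push_cast
  constructor <;> intro h <;> linarith

lemma oddWeight_add_evenWeight (hkn : k ≤ n + 1) : oddWeight n k + evenWeight n k = n + 1 := by
  unfold oddWeight evenWeight; split <;> omega

lemma oddWeight_le_evenWeight (hkn : k ≤ n + 1) : oddWeight n k ≤ evenWeight n k := by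
  have := zk_eq_true_iff (n := n) (k := k)
  unfold oddWeight evenWeight; split <;> simp_all <;> omega

lemma oddWeight_pos (hk1 : 1 ≤ k) (hkn : k ≤ n) : 0 < oddWeight n k := by
  unfold oddWeight; split <;> omega

lemma tval_eq (hk1 : 1 ≤ k) (hkn : k ≤ n) (l O E : ℕ) :
    tval n k l O E = if Odd l then (E + 1) * evenWeight n k / oddWeight n k
      else (O + 1) * oddWeight n k / evenWeight n k := by
  have hfk : ∀ a b : ℕ, fk k (a, b) = k * (a : ℤ) + (1 - k) * b := fun _ _ => rfl
  have hk' : ((n + 1 - k : ℕ) : ℤ) = n + 1 - k := by omega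
  have hx : ∀ w : ℕ, fk k (w * n, w * (n + 1)) = ((w * (n + 1 - k) : ℕ) : ℤ) := by
    intro w; rw [hfk]; push_cast [hk']; ring
  have hy : ∀ w : ℕ, fk k (w, 0) = ((w * k : ℕ) : ℤ) := by
    intro w; rw [hfk]; push_cast; ring
  have h10 : fk k (1, 0) = ((k : ℕ) : ℤ) := by rw [hfk]; push_cast; ring
  have hnn : fk k (n, n + 1) = ((n + 1 - k : ℕ) : ℤ) := by
    rw [hfk, hk']; push_cast; ring
  unfold tval oddWeight evenWeight
  cases zk n k <;> by_cases hl : Odd l <;>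
    simp only [hl, Bool.false_eq_true, iff_true, iff_false, if_true, if_false, not_true] <;>
    first | rw [h10, hx] | rw [hnn, hy]
  all_goals exact sSup_setOf_mul_le_eq_div _ _ (by omega)

end Weights

section GreedyEta

open Greedy

variable {n k : ℕ}

lemma oeSums_succ (l : ℕ) :
    oeSums n k (l + 1) = if Odd (l + 1)
      then ((oeSums n k l).1 + dk n k (l + 1), (oeSums n k l).2)
      else ((oeSums n k l).1, (oeSums n k l).2 + dk n k (l + 1)) := rfl

lemma dk_succ (hk1 : 1 ≤ k) (hkn : k ≤ n) (l : ℕ) :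
    dk n k (l + 1) = if Odd (l + 1)
      then advance (oddWeight n k) (evenWeight n k) n (oeSums n k l).1 (oeSums n k l).2
      else advance (evenWeight n k) (oddWeight n k) n (oeSums n k l).2 (oeSums n k l).1 := by
  simp only [dk, advance, tval_eq hk1 hkn]
  split_ifs <;> omega

lemma oeSums_eq (l : ℕ) :
    oeSums n k l = (sameParitySum (dk n k) 1 (l + 1), sameParitySum (dk n k) 0 (l + 1)) := by
  induction l with
  | zero => simp [oeSums, sameParitySum, dk]
  | succ l ih =>
    rw [oeSums_succ, ih, sameParitySum_succ _ 1 (l + 1), sameParitySum_succ _ 0 (l + 1)]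
    by_cases h : Odd (l + 1) <;> simp [h]

lemma sum_range_dk (l : ℕ) :
    ∑ i ∈ range (l + 1), dk n k i = (oeSums n k l).1 + (oeSums n k l).2 := by
  induction l with
  | zero => simp [oeSums, dk]
  | succ l ih =>
    rw [sum_range_succ, ih, oeSums_succ]
    split_ifs <;> simp only <;> omega

/-- The greedy invariant, oriented towards the axis that the next block advances. -/
lemma greedyInv_oeSums (hk1 : 1 ≤ k) (hkn : k ≤ n) (l : ℕ) :
    if Odd (l + 1)
      then Inv (oddWeight n k) (evenWeight n k) n (oeSums n k l).1 (oeSums n k l).2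
      else Inv (evenWeight n k) (oddWeight n k) n (oeSums n k l).2 (oeSums n k l).1 := by
  have hpos := oddWeight_pos hk1 hkn
  have hle := oddWeight_le_evenWeight (n := n) (k := k) (by omega)
  induction l with
  | zero =>
    simp only [zero_add, odd_one, if_true]
    exact ⟨by simp [oeSums], by simp [oeSums, Greedy.Balanced],
      fun _ => Or.inr ⟨rfl, rfl, hle⟩⟩
  | succ l ih =>
    rw [oeSums_succ, dk_succ hk1 hkn]
    by_cases hl : Odd (l + 1)
    · have hl' : ¬ Odd (l + 1 + 1) := by simpa [Nat.odd_add_one] using hl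
      simp only [hl, hl', if_true, if_false] at ih ⊢
      exact ih.swap_add_advance hpos
    · have hl' : Odd (l + 1 + 1) := by simpa [Nat.odd_add_one] using hl
      simp only [hl, hl', if_true, if_false] at ih ⊢
      exact ih.swap_add_advance (by omega)

lemma oeSums_add_le (hk1 : 1 ≤ k) (hkn : k ≤ n) (l : ℕ) :
    (oeSums n k l).1 + (oeSums n k l).2 ≤ n := by
  have := greedyInv_oeSums hk1 hkn l
  split_ifs at this <;> linarith [this.1]

lemma one_le_dk_succ (hk1 : 1 ≤ k) (hkn : k ≤ n) {l : ℕ}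
    (hl : (oeSums n k l).1 + (oeSums n k l).2 < n) : 1 ≤ dk n k (l + 1) := by
  have := greedyInv_oeSums hk1 hkn l
  have hpos := oddWeight_pos hk1 hkn
  have hle := oddWeight_le_evenWeight (n := n) (k := k) (by omega)
  rw [dk_succ hk1 hkn]
  split_ifs at this ⊢
  · exact this.one_le_advance hpos hl
  · exact this.one_le_advance (by omega) (by omega)

lemma dk_succ_eq_zero {l : ℕ} (hl : n ≤ (oeSums n k l).1 + (oeSums n k l).2) :
    dk n k (l + 1) = 0 := by
  simp only [dk, if_neg (not_lt.2 hl)]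

lemma min_le_oeSums_add (hk1 : 1 ≤ k) (hkn : k ≤ n) (l : ℕ) :
    min l n ≤ (oeSums n k l).1 + (oeSums n k l).2 := by
  induction l with
  | zero => simp
  | succ l ih =>
    have h := sum_range_dk (n := n) (k := k) (l + 1)
    rw [sum_range_succ, sum_range_dk] at h
    by_cases hl : (oeSums n k l).1 + (oeSums n k l).2 < n
    · have := one_le_dk_succ hk1 hkn hl
      omega
    · have := oeSums_add_le hk1 hkn (l + 1)
      omega

end GreedyEta

section EtaK

variable {n k : ℕ}

lemma etak_r_spec (hn : 1 ≤ n) (hk1 : 1 ≤ k) (hkn : k ≤ n) :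
    1 ≤ (etak n k).r ∧ (oeSums n k (etak n k).r).1 + (oeSums n k (etak n k).r).2 = n ∧
      ∀ l < (etak n k).r, (oeSums n k l).1 + (oeSums n k l).2 < n := by
  have hmem : n ∈ {r | ∑ j ∈ range (r + 1), dk n k j = n} := by
    have := min_le_oeSums_add hk1 hkn n
    have := oeSums_add_le hk1 hkn n
    simp only [Set.mem_ofPred_eq, sum_range_dk]
    omega
  have hr : ∑ j ∈ range ((etak n k).r + 1), dk n k j = n := Nat.sInf_mem ⟨n, hmem⟩
  rw [sum_range_dk] at hr
  refine ⟨Nat.pos_of_ne_zero fun h0 => ?_, hr, fun l hl => ?_⟩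
  · simp only [h0, oeSums] at hr
    omega
  · have hl' : l ∉ {r | ∑ j ∈ range (r + 1), dk n k j = n} := Nat.notMem_of_lt_sInf hl
    have := oeSums_add_le hk1 hkn l
    simp only [Set.mem_ofPred_eq, sum_range_dk] at hl'
    omega

lemma etak_isOmega (hn : 1 ≤ n) (hk1 : 1 ≤ k) (hkn : k ≤ n) : (etak n k).IsOmega n := by
  obtain ⟨-, hr, hlt⟩ := etak_r_spec hn hk1 hkn
  have hsum : ∑ i ∈ range ((etak n k).r + 1), dk n k i = n := by rw [sum_range_dk]; exact hr
  refine ⟨rfl, fun i hi1 hir => ?_, fun i hri => ?_, hsum⟩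
  · obtain ⟨l, rfl⟩ : ∃ l, i = l + 1 := ⟨i - 1, by omega⟩
    exact one_le_dk_succ hk1 hkn (hlt l (by omega))
  · obtain ⟨l, rfl⟩ : ∃ l, i = l + 1 := ⟨i - 1, by omega⟩
    apply dk_succ_eq_zero
    have := sum_le_sum_of_subset (f := dk n k)
      (range_subset_range.2 (show (etak n k).r + 1 ≤ l + 1 by omega))
    rwa [hsum, sum_range_dk] at this

lemma etak_last_block (hn : 1 ≤ n) (hk1 : 1 ≤ k) (hkn : k ≤ n) :
    (if Odd (etak n k).r
      then (oeSums n k (etak n k).r).1 = evenWeight n k ∧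
        (oeSums n k (etak n k).r).2 + 1 = oddWeight n k
      else (oeSums n k (etak n k).r).2 = oddWeight n k ∧
        (oeSums n k (etak n k).r).1 + 1 = evenWeight n k) ∧
    (2 ≤ n → 2 ≤ dk n k (etak n k).r) := by
  obtain ⟨hr1, hr, hlt⟩ := etak_r_spec hn hk1 hkn
  obtain ⟨l, hl⟩ : ∃ l, (etak n k).r = l + 1 := ⟨_, (Nat.sub_add_cancel hr1).symm⟩
  have hinv := greedyInv_oeSums hk1 hkn l
  have hpos := oddWeight_pos hk1 hkn
  have hle := oddWeight_le_evenWeight (n := n) (k := k) (by omega)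
  have hsum := oddWeight_add_evenWeight (n := n) (k := k) (by omega)
  have hl' := hlt l (by omega)
  rw [hl, oeSums_succ, dk_succ hk1 hkn] at hr ⊢
  by_cases hodd : Odd (l + 1)
  · simp only [hodd, if_true] at hinv hr ⊢
    obtain ⟨h1, h2, h3⟩ := hinv.eq_of_advance_eq hpos (by omega) hl' hr
    exact ⟨⟨h1, h2⟩, h3⟩
  · simp only [hodd, if_false] at hinv hr ⊢
    obtain ⟨h1, h2, h3⟩ := hinv.eq_of_advance_eq (by omega) (by omega) (by omega) (by omega)
    exact ⟨⟨h1, h2⟩, h3⟩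

end EtaK

namespace OmegaData

noncomputable def vcoord (η : OmegaData) (j : ℕ) : ℕ :=
  sameParitySum η.d (tIdx η j) (tIdx η j) + (j - ∑ i ∈ range (tIdx η j), η.d i)

def splitLast (η : OmegaData) : OmegaData where
  r := η.r + 1
  z := η.z
  d i := if i = η.r then η.d η.r - 1 else if i = η.r + 1 then 1 else η.d i

variable {n j : ℕ} {η : OmegaData}

@[simp] lemma splitLast_z : η.splitLast.z = η.z := rfl

lemma vvec_eq (η : OmegaData) (j : ℕ) :
    vvec η j = if (η.z = true ↔ Odd (tIdx η j)) then (η.vcoord j, 0) else (0, η.vcoord j) :=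
  rfl

lemma tIdx_eq_of_lt_of_le {t : ℕ} (h1 : ∑ i ∈ range t, η.d i < j)
    (h2 : j ≤ ∑ i ∈ range (t + 1), η.d i) : tIdx η j = t := by
  refine le_antisymm (Nat.sInf_le h2) (not_lt.1 fun hlt => ?_)
  have hmem : j ≤ ∑ i ∈ range (tIdx η j + 1), η.d i :=
    Nat.sInf_mem (s := {t | j ≤ ∑ i ∈ range (t + 1), η.d i}) ⟨t, h2⟩
  have := sum_le_sum_of_subset (f := η.d)
    (range_subset_range.2 (show tIdx η j + 1 ≤ t by omega))
  omega

lemma IsOmega.one_le_r (hη : η.IsOmega n) (hn : 1 ≤ n) : 1 ≤ η.r := by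
  by_contra h
  have := hη.2.2.2
  simp [show η.r = 0 by omega, hη.1] at this
  omega

lemma IsOmega.sum_range_r_lt (hη : η.IsOmega n) (hn : 1 ≤ n) :
    ∑ i ∈ range η.r, η.d i < n := by
  have := hη.2.1 η.r (hη.one_le_r hn) le_rfl
  have := hη.2.2.2
  rw [sum_range_succ] at this
  omega

lemma IsOmega.tIdx_spec (hη : η.IsOmega n) (hj : j ≤ n) :
    tIdx η j ≤ η.r ∧ j ≤ ∑ i ∈ range (tIdx η j + 1), η.d i := by
  have hmem : j ≤ ∑ i ∈ range (η.r + 1), η.d i := hη.2.2.2 ▸ hj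
  exact ⟨Nat.sInf_le hmem,
    Nat.sInf_mem (s := {t | j ≤ ∑ i ∈ range (t + 1), η.d i}) ⟨_, hmem⟩⟩

lemma sum_range_tIdx_lt (η : OmegaData) (hj1 : 1 ≤ j) :
    ∑ i ∈ range (tIdx η j), η.d i < j := by
  rcases Nat.eq_zero_or_pos (tIdx η j) with h0 | hpos
  · simp [h0]; omega
  · have : tIdx η j - 1 ∉ {t | j ≤ ∑ i ∈ range (t + 1), η.d i} :=
      Nat.notMem_of_lt_sInf (Nat.sub_lt hpos one_pos)
    simpa [Nat.sub_add_cancel hpos] using this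

lemma IsOmega.tIdx_self (hη : η.IsOmega n) (hn : 1 ≤ n) : tIdx η n = η.r :=
  tIdx_eq_of_lt_of_le (hη.sum_range_r_lt hn) hη.2.2.2.ge

lemma IsOmega.vcoord_self (hη : η.IsOmega n) (hn : 1 ≤ n) :
    η.vcoord n = sameParitySum η.d η.r (η.r + 1) := by
  have := hη.2.2.2
  rw [sum_range_succ] at this
  rw [vcoord, hη.tIdx_self hn, sameParitySum_succ, if_pos Iff.rfl]
  omega

lemma IsOmega.vcoord_self_le (hη : η.IsOmega n) (hn : 1 ≤ n) : η.vcoord n ≤ n := by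
  rw [hη.vcoord_self hn, ← hη.2.2.2]
  exact sum_le_sum fun i _ => by split_ifs <;> simp

lemma one_le_vcoord (η : OmegaData) (hj1 : 1 ≤ j) : 1 ≤ η.vcoord j := by
  have := sum_range_tIdx_lt η hj1
  rw [vcoord]
  omega

lemma IsOmega.vcoord_lt_vcoord_self (hη : η.IsOmega n) (hj1 : 1 ≤ j) (hjn : j < n)
    (hpar : Odd (tIdx η j) ↔ Odd η.r) : η.vcoord j < η.vcoord n := by
  have hn : 1 ≤ n := by omega
  obtain ⟨htr, hup⟩ := hη.tIdx_spec hjn.le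
  have hlow := sum_range_tIdx_lt η hj1
  have hdr := hη.2.1 η.r (hη.one_le_r hn) le_rfl
  have hsum := hη.2.2.2
  rw [hη.vcoord_self hn, sameParitySum_succ, if_pos Iff.rfl, vcoord]
  rw [sum_range_succ] at hup hsum
  generalize tIdx η j = t at *
  rcases htr.lt_or_eq with hlt | rfl
  · have hmono := sameParitySum_mono η.d t (show t + 1 ≤ η.r by omega)
    have hcongr := sameParitySum_congr η.d η.r hpar
    rw [sameParitySum_succ, if_pos Iff.rfl] at hmono
    omega
  · omega

lemma splitLast_d_of_lt {i : ℕ} (h : i < η.r) : η.splitLast.d i = η.d i := by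
  simp [splitLast, h.ne, (h.trans (Nat.lt_succ_self _)).ne]

lemma sum_range_splitLast_d_of_le {m : ℕ} (h : m ≤ η.r) :
    ∑ i ∈ range m, η.splitLast.d i = ∑ i ∈ range m, η.d i :=
  sum_congr rfl fun _ hi => splitLast_d_of_lt ((mem_range.1 hi).trans_le h)

lemma IsOmega.sum_range_splitLast_d (hη : η.IsOmega n) (h2 : 2 ≤ η.d η.r) :
    ∑ i ∈ range (η.r + 1), η.splitLast.d i = n - 1 := by
  have := hη.2.2.2
  rw [sum_range_succ] at this
  rw [sum_range_succ, sum_range_splitLast_d_of_le le_rfl]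
  simp only [splitLast, ↓reduceIte]
  omega

lemma IsOmega.splitLast (hη : η.IsOmega n) (h2 : 2 ≤ η.d η.r) : η.splitLast.IsOmega n := by
  have ⟨h0, hpos, hzero, hsum⟩ := hη
  refine ⟨?_, fun i hi1 hir => ?_, fun i hri => ?_, ?_⟩
  · simp only [OmegaData.splitLast]
    split_ifs with h <;> first | omega | rw [← h, h0]
  · simp only [OmegaData.splitLast] at hir ⊢
    split_ifs <;> first | omega | exact hpos i hi1 (by omega)
  · simp only [OmegaData.splitLast] at hri ⊢
    rw [if_neg (by omega), if_neg (by omega), hzero i (by omega)]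
  · have := hη.sum_range_splitLast_d h2
    have hn : 1 ≤ n := by rw [← hsum, sum_range_succ]; omega
    show ∑ i ∈ range (η.r + 1 + 1), η.splitLast.d i = n
    rw [sum_range_succ, this]
    simp [OmegaData.splitLast]
    omega

lemma IsOmega.splitLast_ne (hη : η.IsOmega n) : η.splitLast ≠ η := fun h => by
  have h1 : η.splitLast.d (η.r + 1) = 1 := by simp [OmegaData.splitLast]
  rw [h, hη.2.2.1 _ (Nat.lt_succ_self _)] at h1
  exact zero_ne_one h1

lemma IsOmega.vvec_splitLast (hη : η.IsOmega n) (h2 : 2 ≤ η.d η.r) (hj1 : 1 ≤ j)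
    (hjn : j < n) :
    vvec η.splitLast j = vvec η j := by
  obtain ⟨htr, hup⟩ := hη.tIdx_spec hjn.le
  have hlow := sum_range_tIdx_lt η hj1
  have ht : tIdx η.splitLast j = tIdx η j := by
    apply tIdx_eq_of_lt_of_le (by rwa [sum_range_splitLast_d_of_le htr])
    rcases htr.lt_or_eq with hlt | heq
    · rwa [sum_range_splitLast_d_of_le (show tIdx η j + 1 ≤ η.r by omega)]
    · rw [heq, hη.sum_range_splitLast_d h2]; omega
  have hsp : sameParitySum η.splitLast.d (tIdx η j) (tIdx η j) =
      sameParitySum η.d (tIdx η j) (tIdx η j) :=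
    sum_congr rfl fun i hi => by rw [splitLast_d_of_lt ((mem_range.1 hi).trans_le htr)]
  simp only [vvec_eq, vcoord, ht, hsp, sum_range_splitLast_d_of_le htr, splitLast_z]

lemma IsOmega.vcoord_splitLast_self (hη : η.IsOmega n) (h2 : 2 ≤ η.d η.r) (hn : 1 ≤ n) :
    η.splitLast.vcoord n = sameParitySum η.d (η.r + 1) (η.r + 1) + 1 := by
  have hpar : ¬ (Odd η.r ↔ Odd (η.r + 1)) := by rw [Nat.odd_add_one]; tauto
  rw [(hη.splitLast h2).vcoord_self hn]
  show sameParitySum η.splitLast.d (η.r + 1) (η.r + 1 + 1) = _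
  have hbelow : sameParitySum η.splitLast.d (η.r + 1) η.r = sameParitySum η.d (η.r + 1) η.r :=
    sum_congr rfl fun i hi => by rw [splitLast_d_of_lt (mem_range.1 hi)]
  rw [sameParitySum_succ, sameParitySum_succ, sameParitySum_succ _ _ η.r, if_pos Iff.rfl,
    if_neg hpar, if_neg hpar, hbelow]
  simp [OmegaData.splitLast]

end OmegaData

noncomputable def core (n : ℕ) (η : OmegaData) : Finset (ℕ × ℕ) :=
  Tj n η 0 ∪ (Icc 1 (n - 1)).biUnion
    (fun i => (Tj n η i).image (fun v => v + (rshift n η i, rshift n η i)))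

noncomputable def lastPoint (n : ℕ) (η : OmegaData) : ℕ × ℕ :=
  vvec η n + (rshift n η n, rshift n η n)

def axisWeight (n k : ℕ) (z : Bool) (t : ℕ) : ℤ :=
  if (z = true ↔ Odd t) then k else n + 1 - k

section PointSets

variable {n : ℕ} {η : OmegaData}

lemma mem_Lam3 {β : ℕ × ℕ × ℕ} :
    β ∈ Lam3 n ↔ 1 ≤ β.1 + β.2.1 + β.2.2 ∧ β.1 + β.2.1 + β.2.2 ≤ n := by
  simp only [Lam3, mem_filter, mem_product, mem_range]
  omega

lemma Amap_injOn : Set.InjOn (Amap n) (Lam3 n) := by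
  rintro ⟨b1, b2, b3⟩ hb ⟨c1, c2, c3⟩ hc h
  simp only [coe_filter, Set.mem_ofPred_eq, Lam3, mem_product, mem_range] at hb hc
  simp only [Amap, Prod.mk.injEq] at h ⊢
  have h3 : b3 = c3 := by
    rcases lt_trichotomy b3 c3 with hlt | heq | hgt
    · have : (n + 1) * b3 + (n + 1) ≤ (n + 1) * c3 := by nlinarith
      omega
    · exact heq
    · have : (n + 1) * c3 + (n + 1) ≤ (n + 1) * b3 := by nlinarith
      omega
  subst h3
  omega

lemma Tset'_eq_insert (hn : 1 ≤ n) : Tset' n η = insert (lastPoint n η) (core n η) := by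
  have hIcc : Icc 1 n = insert n (Icc 1 (n - 1)) := by
    ext a; simp only [mem_Icc, mem_insert]; omega
  have hTn : Tj n η n = {vvec η n} := by
    simp [Tj, show n ≠ 0 by omega]
  rw [Tset', hIcc, biUnion_insert, hTn, image_singleton, core, lastPoint,
    ← union_assoc, union_comm (Tj n η 0), union_assoc, insert_eq]

lemma core_congr {η' : OmegaData} (h : ∀ j, 1 ≤ j → j < n → vvec η j = vvec η' j) :
    core n η = core n η' := by
  unfold core
  refine congrArg₂ _ rfl (biUnion_congr rfl fun i hi => ?_)
  have hi := mem_Icc.1 hi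
  simp only [Tj, rshift, if_neg (show i ≠ 0 by omega), h i hi.1 (by omega)]

lemma mem_core {v : ℕ × ℕ} (hv : v ∈ core n η) :
    (∃ q, v = (q + 1, q + 1)) ∨
      ∃ j, 1 ≤ j ∧ j < n ∧
        ∃ p, v = vvec η j + (rshift n η j + p, rshift n η j + p) := by
  simp only [core, Tj, mem_union, mem_biUnion, mem_Icc, mem_image, mem_range, if_true] at hv
  rcases hv with ⟨q, -, rfl⟩ | ⟨j, hj, w, hw, rfl⟩
  · exact Or.inl ⟨q, rfl⟩
  · simp only [if_neg (show j ≠ 0 by omega), mem_image, mem_range] at hw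
    obtain ⟨p, -, rfl⟩ := hw
    refine Or.inr ⟨j, hj.1, by omega, p, ?_⟩
    simp only [Prod.ext_iff, Prod.fst_add, Prod.snd_add]
    omega

lemma OmegaData.IsOmega.lastPoint_not_mem_core (hη : η.IsOmega n) (hn : 1 ≤ n) :
    lastPoint n η ∉ core n η := by
  intro hmem
  have hA := η.one_le_vcoord hn
  rcases mem_core hmem with ⟨q, hq⟩ | ⟨j, hj1, hjn, p, hp⟩
  · rw [lastPoint, rshift, OmegaData.vvec_eq] at hq
    split_ifs at hq <;> simp [Prod.ext_iff] at hq
    omega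
  · have ha := η.one_le_vcoord hj1
    have hlt : (Odd (tIdx η j) ↔ Odd η.r) → η.vcoord j < η.vcoord n :=
      hη.vcoord_lt_vcoord_self hj1 hjn
    rw [lastPoint, rshift, rshift, OmegaData.vvec_eq, OmegaData.vvec_eq, hη.tIdx_self hn] at hp
    split_ifs at hp with h1 h2 h2 <;> simp [Prod.ext_iff] at hp
    · have := hlt (by tauto); omega
    · omega
    · omega
    · have := hlt (by tauto); omega

end PointSets

section Weighing

variable {n : ℕ} {η : OmegaData}

lemma fk_add (k : ℕ) (u v : ℕ × ℕ) : fk k (u + v) = fk k u + fk k v := by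
  simp only [fk, Prod.fst_add, Prod.snd_add]
  push_cast
  ring

lemma fk_Amap (k : ℕ) (β : ℕ × ℕ × ℕ) :
    fk k (Amap n β) = k * β.1 + β.2.1 + (n + 1 - k) * β.2.2 := by
  simp only [fk, Amap]
  push_cast
  ring

lemma OmegaData.IsOmega.lastPoint_eq_Amap (hη : η.IsOmega n) (hn : 1 ≤ n) :
    lastPoint n η = Amap n
      (if (η.z = true ↔ Odd η.r) then (η.vcoord n, 0, 0) else (0, 0, η.vcoord n)) := by
  rw [lastPoint, rshift, OmegaData.vvec_eq, hη.tIdx_self hn]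
  split_ifs
  · simp [Amap]
  · simp [Amap]
    ring

lemma OmegaData.IsOmega.mJ_Jset (hη : η.IsOmega n) (hn : 1 ≤ n) :
    mJ n (Jset n η) =
      mJ n ((Lam3 n).filter (fun β => Amap n β ∈ core n η)) + lastPoint n η := by
  set β₀ := if (η.z = true ↔ Odd η.r) then (η.vcoord n, 0, 0) else (0, 0, η.vcoord n)
  have hβ₀ : β₀ ∈ Lam3 n := by
    have := η.one_le_vcoord hn
    have := hη.vcoord_self_le hn
    rw [mem_Lam3]; simp only [β₀]; split_ifs <;> simp <;> omega
  have hP := hη.lastPoint_eq_Amap hn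
  have hJ : Jset n η = insert β₀ ((Lam3 n).filter (fun β => Amap n β ∈ core n η)) := by
    ext β
    simp only [Jset, Tset'_eq_insert hn, mem_filter, mem_insert, hP]
    constructor
    · rintro ⟨hβ, h | h⟩
      · exact Or.inl (Amap_injOn hβ hβ₀ h)
      · exact Or.inr ⟨hβ, h⟩
    · rintro (rfl | ⟨hβ, h⟩)
      · exact ⟨hβ₀, Or.inl rfl⟩
      · exact ⟨hβ, Or.inr h⟩
  have hβ₀' : β₀ ∉ (Lam3 n).filter (fun β => Amap n β ∈ core n η) := fun h =>
    hη.lastPoint_not_mem_core hn (hP ▸ (mem_filter.1 h).2)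
  rw [mJ, hJ, sum_insert hβ₀', add_comm, hP]
  rfl

lemma OmegaData.IsOmega.fk_mJ_Jset (k : ℕ) (hη : η.IsOmega n) (hn : 1 ≤ n) :
    fk k (mJ n (Jset n η)) = fk k (mJ n ((Lam3 n).filter (fun β => Amap n β ∈ core n η))) +
      axisWeight n k η.z η.r * η.vcoord n := by
  rw [hη.mJ_Jset hn, fk_add, hη.lastPoint_eq_Amap hn, fk_Amap, axisWeight]
  split_ifs <;> simp

end Weighing

section LastBlock

variable {n k : ℕ}

lemma axisWeight_zk (hkn : k ≤ n) (t : ℕ) :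
    axisWeight n k (zk n k) t = if Odd t then (oddWeight n k : ℤ) else evenWeight n k := by
  have : ((n + 1 - k : ℕ) : ℤ) = n + 1 - k := by omega
  unfold axisWeight oddWeight evenWeight
  cases zk n k <;> by_cases ht : Odd t <;> simp [ht, this]

lemma axisWeight_mul_vcoord_etak (hn : 1 ≤ n) (hk1 : 1 ≤ k) (hkn : k ≤ n) :
    axisWeight n k (etak n k).z (etak n k).r * (etak n k).vcoord n =
      oddWeight n k * evenWeight n k := by
  have hlast := (etak_last_block hn hk1 hkn).1
  simp only [oeSums_eq] at hlast
  rw [(etak_isOmega hn hk1 hkn).vcoord_self hn]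
  show axisWeight n k (zk n k) _ * (sameParitySum (dk n k) _ _ : ℤ) = _
  rw [axisWeight_zk hkn]
  by_cases hr : Odd (etak n k).r
  · rw [if_pos hr] at hlast ⊢
    rw [sameParitySum_congr _ _ (show Odd (etak n k).r ↔ Odd 1 by simp [hr]), hlast.1]
  · rw [if_neg hr] at hlast ⊢
    rw [sameParitySum_congr _ _ (show Odd (etak n k).r ↔ Odd 0 by simp [hr]), hlast.1]
    ring

lemma axisWeight_mul_vcoord_splitLast_etak (hn2 : 2 ≤ n) (hk1 : 1 ≤ k) (hkn : k ≤ n) :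
    axisWeight n k (etak n k).splitLast.z (etak n k).splitLast.r *
      (etak n k).splitLast.vcoord n = oddWeight n k * evenWeight n k := by
  obtain ⟨hlast, h2⟩ := etak_last_block (by omega) hk1 hkn
  simp only [oeSums_eq] at hlast
  rw [(etak_isOmega (by omega) hk1 hkn).vcoord_splitLast_self (h2 hn2) (by omega)]
  show axisWeight n k (zk n k) ((etak n k).r + 1) *
    ((sameParitySum (dk n k) ((etak n k).r + 1) ((etak n k).r + 1) + 1 : ℕ) : ℤ) = _
  rw [axisWeight_zk hkn]
  by_cases hr : Odd (etak n k).r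
  · have hr' : ¬ Odd ((etak n k).r + 1) := by rw [Nat.odd_add_one]; tauto
    rw [if_pos hr] at hlast
    rw [if_neg hr', sameParitySum_congr _ _ (show Odd ((etak n k).r + 1) ↔ Odd 0 by simp [hr']),
      hlast.2]
    ring
  · have hr' : Odd ((etak n k).r + 1) := by rw [Nat.odd_add_one]; tauto
    rw [if_neg hr] at hlast
    rw [if_pos hr', sameParitySum_congr _ _ (show Odd ((etak n k).r + 1) ↔ Odd 1 by simp [hr']),
      hlast.2]

end LastBlock

theorem stmt6 (n : ℕ) (hn : 1 ≤ n) (k : ℕ) (hk1 : 1 ≤ k) (hkn : k ≤ n) :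
    ∃ η : OmegaData, η.IsOmega n ∧ η ≠ etak n k ∧
      fk k (mJ n (Jset n η)) = fk k (mJ n (Jset n (etak n k))) := by
  have hη := etak_isOmega hn hk1 hkn
  rcases hn.eq_or_lt with rfl | hn2
  · -- The single block `d_1 = 1` cannot be split; flipping `z` works as both weights are `1`.
    obtain rfl : k = 1 := by omega
    let η' : OmegaData := { etak 1 1 with z := false }
    have hη' : η'.IsOmega 1 := hη
    refine ⟨η', hη', fun h => absurd (congrArg OmegaData.z h) (by decide), ?_⟩
    rw [hη'.fk_mJ_Jset 1 le_rfl, hη.fk_mJ_Jset 1 le_rfl, core_congr (η' := etak 1 1) (by omega)]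
    simp [axisWeight]
    rfl
  · obtain ⟨-, h2⟩ := etak_last_block hn hk1 hkn
    have hsplit := hη.splitLast (h2 hn2)
    refine ⟨(etak n k).splitLast, hsplit, hη.splitLast_ne, ?_⟩
    rw [hsplit.fk_mJ_Jset k hn, hη.fk_mJ_Jset k hn,
      core_congr fun j hj1 hjn => hη.vvec_splitLast (h2 hn2) hj1 hjn,
      axisWeight_mul_vcoord_splitLast_etak hn2 hk1 hkn, axisWeight_mul_vcoord_etak hn hk1 hkn]
end

section
/- Let l, m ∈ ℕ with 1 ≤ l ≤ n and m ≤ n−l+1, let η ∈ Ω, and let (a_v)_{v ∈ T_η} be complex numbers with Σ_{v ∈ T_η} a_v · v̄ = 0 in ℂ^{Λ_{2,n}}. Suppose E = {(c_1,l),…,(c_m,l)} ⊆ T_η for some 0 < c_1 < ⋯ < c_m, and suppose that a_u = 0 for every u ∈ T_η ∖ E with π₂(u) ≥ l. Then a_v = 0 for all v ∈ E. The analogous statement holds with the two coordinates interchanged (E = {(l,c_1),…,(l,c_m)} ⊆ T_η and a_u = 0 for every u ∈ T_η ∖ E with π₁(u) ≥ l). -/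
lemma key_choose_zero {m : ℕ} (c : Fin m → ℕ) (hc : StrictMono c) (x : Fin m → ℂ)
    (h : ∀ k : Fin m, ∑ i, x i * ((c i).choose (k : ℕ) : ℂ) = 0) : ∀ i, x i = 0 := by
  set M : Matrix (Fin m) (Fin m) ℂ :=
    Matrix.of fun i k : Fin m => ((descPochhammer ℂ (k : ℕ)).eval ((c i : ℕ) : ℂ)) with hM
  have hdet : M.det ≠ 0 := by
    rw [hM, ← Matrix.det_eval_matrixOfPolynomials_eq_det_vandermonde
      (fun i => ((c i : ℕ) : ℂ)) (fun k => descPochhammer ℂ (k : ℕ))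
      (fun k => descPochhammer_natDegree ℂ _) (fun k => monic_descPochhammer ℂ _)]
    rw [Matrix.det_vandermonde_ne_zero_iff]
    intro i j hij
    exact hc.injective (Nat.cast_injective hij)
  have hx : x = 0 := by
    apply Matrix.eq_zero_of_vecMul_eq_zero hdet
    funext k
    have hk := h k
    have hMk : ∀ i, M i k = ((k : ℕ).factorial : ℂ) * ((c i).choose (k : ℕ) : ℂ) := by
      intro i
      rw [hM]
      simp only [Matrix.of_apply]
      rw [descPochhammer_eval_eq_descFactorial, Nat.descFactorial_eq_factorial_mul_choose]
      push_cast; ring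
    simp only [Matrix.vecMul, dotProduct, hMk, Pi.zero_apply]
    calc ∑ i, x i * (((k:ℕ).factorial : ℂ) * ((c i).choose (k : ℕ) : ℂ))
        = (∑ i, x i * ((c i).choose (k : ℕ) : ℂ)) * ((k:ℕ).factorial : ℂ) := by
          rw [Finset.sum_mul]; congr 1; funext i; ring
      _ = 0 := by rw [hk, zero_mul]
  intro i; rw [hx]; rfl

lemma half_lemma (n l m : ℕ) (hl1 : 1 ≤ l) (hln : l ≤ n) (hm : m ≤ n - l + 1)
    (S : Finset (ℕ × ℕ)) (a : ℕ × ℕ → ℂ)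
    (hsum : ∀ k, k + l ≤ n →
      ∑ v ∈ S, a v * ((v.1.choose k * v.2.choose l : ℕ) : ℂ) = 0)
    (c : Fin m → ℕ) (hc : StrictMono c)
    (hE : ∀ i, (c i, l) ∈ S)
    (h0 : ∀ u ∈ S, (∀ i, u ≠ (c i, l)) → l ≤ u.2 → a u = 0) :
    ∀ i, a (c i, l) = 0 := by
  apply key_choose_zero c hc (fun i => a (c i, l))
  intro k
  have hkm : (k : ℕ) < m := k.2
  have hkl : (k : ℕ) + l ≤ n := by omega
  have h1 := hsum k hkl
  have hsub : (Finset.univ.image fun i : Fin m => (c i, l)) ⊆ S := by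
    intro v hv
    simp only [Finset.mem_image, Finset.mem_univ, true_and] at hv
    obtain ⟨i, rfl⟩ := hv; exact hE i
  have hzero : ∀ v ∈ S, v ∉ (Finset.univ.image fun i : Fin m => (c i, l)) →
      a v * ((v.1.choose (k : ℕ) * v.2.choose l : ℕ) : ℂ) = 0 := by
    intro v hv hvE
    rcases lt_or_ge v.2 l with hvl | hvl
    · rw [Nat.choose_eq_zero_of_lt hvl]
      simp
    · have : ∀ i : Fin m, v ≠ (c i, l) := by
        intro i hvi
        exact hvE (Finset.mem_image.mpr ⟨i, Finset.mem_univ i, hvi.symm⟩)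
      rw [h0 v hv this hvl, zero_mul]
  rw [← Finset.sum_subset hsub hzero] at h1
  rw [Finset.sum_image (by
    intro i _ j _ hij
    exact hc.injective (congrArg Prod.fst hij))] at h1
  simpa [Nat.choose_self] using h1


open Finset

theorem stmt10 (n : ℕ) (hn : 1 ≤ n) (η : OmegaData) (hη : η.IsOmega n)
    (l m : ℕ) (hl1 : 1 ≤ l) (hln : l ≤ n) (hm : m ≤ n - l + 1)
    (a : ℕ × ℕ → ℂ) (hsum : ∑ v ∈ Tset n η, a v • vbar n v = 0)
    (c : Fin m → ℕ) (hc0 : ∀ i, 0 < c i) (hc : StrictMono c) :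
    ((∀ i : Fin m, (c i, l) ∈ Tset n η) →
     (∀ u ∈ Tset n η, (∀ i : Fin m, u ≠ (c i, l)) → l ≤ u.2 → a u = 0) →
     ∀ i : Fin m, a (c i, l) = 0) ∧
    ((∀ i : Fin m, (l, c i) ∈ Tset n η) →
     (∀ u ∈ Tset n η, (∀ i : Fin m, u ≠ (l, c i)) → l ≤ u.1 → a u = 0) →
     ∀ i : Fin m, a (l, c i) = 0) := by
  have coordEq : ∀ p q : ℕ, p + q ≤ n → 1 ≤ p + q →
      ∑ v ∈ Tset n η, a v * ((v.1.choose p * v.2.choose q : ℕ) : ℂ) = 0 := by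
    intro p q hpq hpq1
    have hmem : ((p, q) : ℕ × ℕ) ∈ Lam2 n := by
      simp only [Lam2, Finset.mem_filter, Finset.mem_product, Finset.mem_range]
      omega
    have h := congrFun hsum ⟨(p, q), hmem⟩
    simpa [vbar, smul_eq_mul] using h
  constructor
  · intro hE h0
    exact half_lemma n l m hl1 hln hm (Tset n η) a
      (fun k hk => coordEq k l hk (by omega)) c hc hE h0
  · intro hE h0
    have hswap : ∀ i, a (l, c i) = (fun v => a v.swap) (c i, l) := fun i => rfl
    intro i
    rw [hswap i]
    refine half_lemma n l m hl1 hln hm ((Tset n η).image Prod.swap)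
      (fun v => a v.swap) ?_ c hc ?_ ?_ i
    · intro k hk
      rw [Finset.sum_image (fun x _ y _ h => Prod.swap_injective h)]
      have := coordEq l k (by omega) (by omega)
      simpa [mul_comm] using this
    · intro j
      exact Finset.mem_image.mpr ⟨(l, c j), hE j, rfl⟩
    · intro u hu hune hul
      obtain ⟨w, hw, rfl⟩ := Finset.mem_image.mp hu
      refine h0 w hw (fun j hj => hune j ?_) ?_
      · rw [hj]; rfl
      · simpa using hul
end

section
/- For every m ∈ ℕ, the vector (m,m)‾ lies in the ℂ-linear span of {(1,1)‾, (2,2)‾, …, (n,n)‾} in ℂ^{Λ_{2,n}}. Explicitly, (m,m)‾ = Σ_{j=1}^{n} C(m,j) · v_j, where v_j := Σ_{i=1}^{j} (−1)^{j−i} C(j,i) · (i,i)‾. -/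
open Finset

/-! Each coordinate `α = (a, b)` of `(m, m)‾` is the value at `m` of the polynomial
`p = C(X, a) C(X, b)`, of degree `a + b ≤ n` and with `p 0 = 0`. Newton's forward difference
formula gives `p m = ∑ⱼ C(m, j) Δʲp(0)`, where the differences of order `> n` vanish and
`Δʲp(0) = ∑ᵢ (-1)^(j-i) C(j, i) p i`; the terms `j = 0` and `i = 0` drop out since
`p 0 = 0`. -/

open Polynomial fwdDiff

lemma sum_range_succ_eq_sum_Icc_one {M : Type*} [AddCommMonoid M] {f : ℕ → M} (hf : f 0 = 0)
    (n : ℕ) : ∑ i ∈ range (n + 1), f i = ∑ i ∈ Icc 1 n, f i := by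
  rw [Nat.range_succ_eq_Icc_zero, ← insert_Icc_add_one_left_eq_Icc n.zero_le,
    sum_insert (by simp), hf, zero_add, zero_add]

lemma fwdDiff_iter_eval_zero {R : Type*} [CommRing R] (P : R[X]) (j : ℕ) :
    (Δ_[1])^[j] P.eval 0 =
      ∑ i ∈ range (j + 1), (-1) ^ (j - i) * (j.choose i : R) * P.eval (i : R) := by
  simp [fwdDiff_iter_eq_sum_shift, zsmul_eq_mul]

theorem Polynomial.eval_natCast_eq_sum_choose_mul_fwdDiff {R : Type*} [CommRing R] (P : R[X])
    {n : ℕ} (hP : P.natDegree ≤ n) (m : ℕ) :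
    P.eval (m : R) = ∑ j ∈ range (n + 1), (m.choose j : R) * (Δ_[1])^[j] P.eval 0 := by
  have hvanish : ∀ j ≥ min m n + 1, (m.choose j : R) * (Δ_[1])^[j] P.eval 0 = 0 := by
    intro j hj
    rcases le_total m n with h | h
    · rw [Nat.choose_eq_zero_of_lt (by omega), Nat.cast_zero, zero_mul]
    · rw [fwdDiff_iter_eq_zero_of_degree_lt (by omega), Pi.zero_apply, mul_zero]
  have hnewton := shift_eq_sum_fwdDiff_iter 1 P.eval m 0
  simp only [zero_add, nsmul_eq_mul, mul_one] at hnewton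
  rw [hnewton, eventually_constant_sum hvanish (by omega),
    eventually_constant_sum hvanish (by omega : min m n + 1 ≤ n + 1)]

theorem Polynomial.eval_natCast_eq_sum_Icc_of_eval_zero {R : Type*} [CommRing R] (P : R[X])
    {n : ℕ} (hP : P.natDegree ≤ n) (hP0 : P.eval 0 = 0) (m : ℕ) :
    P.eval (m : R) = ∑ j ∈ Icc 1 n, (m.choose j : R) *
      ∑ i ∈ Icc 1 j, (-1) ^ (j - i) * (j.choose i : R) * P.eval (i : R) := by
  rw [P.eval_natCast_eq_sum_choose_mul_fwdDiff hP, sum_range_succ_eq_sum_Icc_one (by simp [hP0])]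
  refine sum_congr rfl fun j _ ↦ ?_
  rw [fwdDiff_iter_eval_zero, sum_range_succ_eq_sum_Icc_one (by simp [hP0])]

noncomputable def Polynomial.binomial (K : Type*) [Field K] (a : ℕ) : K[X] :=
  C (a.factorial : K)⁻¹ * descPochhammer K a

lemma Polynomial.binomial_eval_natCast {K : Type*} [Field K] [CharZero K] (a x : ℕ) :
    (binomial K a).eval (x : K) = x.choose a := by
  rw [binomial, eval_mul, eval_C, Nat.cast_choose_eq_descPochhammer_div, div_eq_inv_mul]

lemma Polynomial.natDegree_binomial_le {K : Type*} [Field K] (a : ℕ) :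
    (binomial K a).natDegree ≤ a :=
  (natDegree_C_mul_le _ _).trans (descPochhammer_natDegree K a).le

lemma vbar_diag_eq_sum (n m : ℕ) :
    vbar n (m, m) = ∑ j ∈ Icc 1 n, (m.choose j : ℂ) •
      ∑ i ∈ Icc 1 j, ((-1 : ℂ) ^ (j - i) * (j.choose i : ℂ)) • vbar n (i, i) := by
  funext ⟨⟨a, b⟩, hab⟩
  simp only [Lam2, mem_filter] at hab
  let P : ℂ[X] := binomial ℂ a * binomial ℂ b
  have hP : ∀ x : ℕ, P.eval (x : ℂ) = x.choose a * x.choose b := fun x ↦ by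
    simp only [P, eval_mul, binomial_eval_natCast]
  have hP0 : P.eval 0 = 0 := by
    rcases Nat.eq_zero_or_pos a with rfl | ha
    · simpa [Nat.choose_eq_zero_of_lt (by omega : 0 < b)] using hP 0
    · simpa [Nat.choose_eq_zero_of_lt ha] using hP 0
  have hdeg : P.natDegree ≤ n := natDegree_mul_le.trans <|
    (add_le_add (natDegree_binomial_le a) (natDegree_binomial_le b)).trans hab.2.2
  simpa only [vbar, Finset.sum_apply, Pi.smul_apply, smul_eq_mul, Nat.cast_mul, hP]
    using P.eval_natCast_eq_sum_Icc_of_eval_zero hdeg hP0 m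

theorem stmt12_general (n : ℕ) (m : ℕ) :
    vbar n (m, m) =
      ∑ j ∈ Finset.Icc 1 n, (m.choose j : ℂ) •
        (∑ i ∈ Finset.Icc 1 j, ((-1 : ℂ) ^ (j - i) * (j.choose i : ℂ)) • vbar n (i, i)) ∧
    vbar n (m, m) ∈
      Submodule.span ℂ {x | ∃ i : ℕ, 1 ≤ i ∧ i ≤ n ∧ x = vbar n (i, i)} := by
  refine ⟨vbar_diag_eq_sum n m, vbar_diag_eq_sum n m ▸ Submodule.sum_mem _ fun j hj ↦
    Submodule.smul_mem _ _ <| Submodule.sum_mem _ fun i hi ↦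
      Submodule.smul_mem _ _ <| Submodule.subset_span ?_⟩
  simp only [mem_Icc] at hi hj
  exact ⟨i, hi.1, hi.2.trans hj.2, rfl⟩

theorem stmt12 (n : ℕ) (hn : 1 ≤ n) (m : ℕ) :
    vbar n (m, m) =
      ∑ j ∈ Finset.Icc 1 n, (m.choose j : ℂ) •
        (∑ i ∈ Finset.Icc 1 j, ((-1 : ℂ) ^ (j - i) * (j.choose i : ℂ)) • vbar n (i, i)) ∧
    vbar n (m, m) ∈
      Submodule.span ℂ {x | ∃ i : ℕ, 1 ≤ i ∧ i ≤ n ∧ x = vbar n (i, i)} :=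
  stmt12_general n m
end
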